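/- arXiv:2012.09972 — 3 statements merged into one kernel-verified Lean document; each statement's English description precedes it below -/
import Mathlib

section
/- Let G be a finite simple connected graph with monitors m1 and m2, let u and v be adjacent vertices of G with u ∉ {m1, m2} and v ≠ m1, and suppose every path in G from m1 to v passes through u (i.e., u separates m1 from v). Then the edge uv is unidentifiable: there exist two positive weight functions on the edges of G that assign equal metrics to every simple path from m1 to m2 but assign different weights to the edge uv. -/
/-!
Let `A` be the component of `v` in `G - u`; since `u` separates `m1` from `v`, `m1 ∉ A`, and `A`
is attached to the rest of `G` only through `u`. A simple `m1`–`m2` path either avoids `u`, or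
passes `u` once, arriving from outside `A` and leaving into `A` exactly when `m2 ∈ A`. Hence,
starting from the constant weight `2`, adding `+1` on the edges from `u` into `A` and, when
`m2 ∈ A`, `-1` on the other edges at `u` leaves every path metric unchanged but not the weight
of `uv`.
-/

namespace SimpleGraph

variable {V : Type*} {G : SimpleGraph V} {u : V}

def ReachableAvoiding (G : SimpleGraph V) (u x y : V) : Prop :=
  ∃ p : G.Walk x y, u ∉ p.support

namespace ReachableAvoiding

theorem refl {x : V} (hx : x ≠ u) : G.ReachableAvoiding u x x :=
  ⟨.nil, by simpa using hx.symm⟩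

theorem symm {x y : V} (h : G.ReachableAvoiding u x y) : G.ReachableAvoiding u y x := by
  obtain ⟨p, hp⟩ := h
  exact ⟨p.reverse, by simpa using hp⟩

theorem trans {x y z : V} (hxy : G.ReachableAvoiding u x y) (hyz : G.ReachableAvoiding u y z) :
    G.ReachableAvoiding u x z := by
  obtain ⟨p, hp⟩ := hxy
  obtain ⟨q, hq⟩ := hyz
  exact ⟨p.append q, by simp [Walk.mem_support_append_iff, hp, hq]⟩

theorem exists_isPath {x y : V} (h : G.ReachableAvoiding u x y) :
    ∃ p : G.Walk x y, p.IsPath ∧ u ∉ p.support := by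
  classical
  obtain ⟨p, hp⟩ := h
  exact ⟨p.bypass, p.bypass_isPath, fun hu => hp (p.support_bypass_subset_support hu)⟩

end ReachableAvoiding

open Classical in
noncomputable def starWeight (u : V) (h : V → ℝ) : Sym2 V → ℝ :=
  Sym2.lift ⟨fun x y => (if x = u then h y else 0) + (if y = u then h x else 0),
    fun _ _ => add_comm _ _⟩

theorem starWeight_mk_of_ne {h : V → ℝ} {x y : V} (hx : x ≠ u) (hy : y ≠ u) :
    starWeight u h s(x, y) = 0 := by
  simp [starWeight, hx, hy]

theorem starWeight_mk_left {h : V → ℝ} {y : V} (hy : y ≠ u) : starWeight u h s(u, y) = h y := by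
  simp [starWeight, hy]

theorem neg_one_le_starWeight {h : V → ℝ} (hh : ∀ x, -1 ≤ h x) {e : Sym2 V} (he : e ∈ G.edgeSet) :
    -1 ≤ starWeight u h e := by
  induction e using Sym2.ind with
  | _ x y =>
    have hxy : x ≠ y := (mem_edgeSet G).1 he |>.ne
    by_cases hx : x = u
    · subst hx; rw [starWeight_mk_left hxy.symm]; exact hh y
    by_cases hy : y = u
    · subst hy; rw [Sym2.eq_swap, starWeight_mk_left hx]; exact hh x
    · rw [starWeight_mk_of_ne hx hy]; norm_num

namespace Walk

theorem sum_starWeight_of_not_mem_support (h : V → ℝ) {a b : V} (p : G.Walk a b)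
    (hu : u ∉ p.support) : (p.edges.map (starWeight u h)).sum = 0 := by
  refine List.sum_eq_zero fun _ hmem => ?_
  obtain ⟨e, he, rfl⟩ := List.mem_map.1 hmem
  induction e using Sym2.ind with
  | _ x y =>
    exact starWeight_mk_of_ne (fun hx => hu (hx ▸ p.fst_mem_support_of_mem_edges he))
      (fun hy => hu (hy ▸ p.snd_mem_support_of_mem_edges he))

theorem IsPath.sum_starWeight_of_start (h : V → ℝ) {b : V} {p : G.Walk u b} (hp : p.IsPath)
    (hb : b ≠ u) : ∃ d, G.ReachableAvoiding u d b ∧ (p.edges.map (starWeight u h)).sum = h d := by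
  obtain ⟨d, hud, q, rfl⟩ := p.exists_eq_cons_of_ne hb.symm
  have hq : u ∉ q.support := ((cons_isPath_iff hud q).1 hp).2
  refine ⟨d, ⟨q, hq⟩, ?_⟩
  rw [edges_cons, List.map_cons, List.sum_cons, starWeight_mk_left hud.ne',
    sum_starWeight_of_not_mem_support h q hq, add_zero]

theorem IsPath.sum_starWeight_of_mem_support (h : V → ℝ) {a b : V} {p : G.Walk a b}
    (hp : p.IsPath) (ha : a ≠ u) (hb : b ≠ u) (hu : u ∈ p.support) :
    ∃ c d, G.ReachableAvoiding u a c ∧ G.ReachableAvoiding u d b ∧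
      (p.edges.map (starWeight u h)).sum = h c + h d := by
  classical
  obtain ⟨c, hac, hc⟩ := (hp.takeUntil hu).reverse.sum_starWeight_of_start h ha
  obtain ⟨d, hdb, hd⟩ := (hp.dropUntil hu).sum_starWeight_of_start h hb
  refine ⟨c, d, hac.symm, hdb, ?_⟩
  rw [edges_reverse, List.map_reverse, List.sum_reverse] at hc
  rw [← p.take_spec hu, edges_append, List.map_append, List.sum_append, hc, hd]

end Walk

open Classical in
noncomputable def sideSign (G : SimpleGraph V) (u v m : V) (x : V) : ℝ :=
  if G.ReachableAvoiding u v x then 1 else if G.ReachableAvoiding u v m then -1 else 0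

theorem neg_one_le_sideSign (G : SimpleGraph V) (u v m x : V) : -1 ≤ G.sideSign u v m x := by
  unfold sideSign; split_ifs <;> norm_num

theorem sideSign_add_sideSign_eq_zero {v a c d m : V} (ha : ¬ G.ReachableAvoiding u v a)
    (hac : G.ReachableAvoiding u a c) (hdm : G.ReachableAvoiding u d m) :
    G.sideSign u v m c + G.sideSign u v m d = 0 := by
  have hc : ¬ G.ReachableAvoiding u v c := fun hvc => ha (hvc.trans hac.symm)
  by_cases hvd : G.ReachableAvoiding u v d
  · simp [sideSign, hc, hvd, hvd.trans hdm]
  · have hvm : ¬ G.ReachableAvoiding u v m := fun hvm => hvd (hvm.trans hdm.symm)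
    simp [sideSign, hc, hvd, hvm]

theorem Walk.IsPath.sum_starWeight_sideSign_eq_zero {v a m : V} {p : G.Walk a m} (hp : p.IsPath)
    (ha : a ≠ u) (hm : m ≠ u) (hva : ¬ G.ReachableAvoiding u v a) :
    (p.edges.map (starWeight u (G.sideSign u v m))).sum = 0 := by
  by_cases hu : u ∈ p.support
  · obtain ⟨c, d, hac, hdm, hsum⟩ := hp.sum_starWeight_of_mem_support _ ha hm hu
    rw [hsum, sideSign_add_sideSign_eq_zero hva hac hdm]
  · exact p.sum_starWeight_of_not_mem_support _ hu

end SimpleGraph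

open SimpleGraph

theorem separated_link_unidentifiable_general {V : Type*}
    (G : SimpleGraph V)
    (m1 m2 : V)
    (u v : V) (hadj : G.Adj u v)
    (hu1 : u ≠ m1) (hu2 : u ≠ m2)
    (hsep : ∀ p : G.Walk m1 v, p.IsPath → u ∈ p.support) :
    ∃ w1 w2 : Sym2 V → ℝ,
      (∀ e ∈ G.edgeSet, 0 < w1 e) ∧ (∀ e ∈ G.edgeSet, 0 < w2 e) ∧
      (∀ p : G.Walk m1 m2, p.IsPath →
        (p.edges.map w1).sum = (p.edges.map w2).sum) ∧
      w1 s(u, v) ≠ w2 s(u, v) := by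
  set δ := starWeight u (G.sideSign u v m2)
  have hvm1 : ¬ G.ReachableAvoiding u v m1 := fun h =>
    let ⟨p, hp, hu⟩ := h.symm.exists_isPath
    hu (hsep p hp)
  refine ⟨fun _ => 2, fun e => 2 + δ e, fun _ _ => two_pos, fun e he => ?_, fun p hp => ?_, ?_⟩
  · have : -1 ≤ δ e := neg_one_le_starWeight (neg_one_le_sideSign G u v m2) he
    linarith
  · rw [List.sum_map_add, hp.sum_starWeight_sideSign_eq_zero hu1.symm hu2.symm hvm1, add_zero]
  · have hvv : G.ReachableAvoiding u v v := .refl hadj.ne'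
    simp [δ, starWeight_mk_left hadj.ne', sideSign, hvv]

/-- If `u v` is an edge with `u` not a monitor, `v ≠ m1`, and `u`
separates `m1` from `v` (every simple path from `m1` to `v` passes through `u`),
then the edge `u v` is unidentifiable. -/
theorem separated_link_unidentifiable {V : Type*} [Fintype V]
    (G : SimpleGraph V) (hG : G.Connected)
    (m1 m2 : V) (hm : m1 ≠ m2)
    (u v : V) (hadj : G.Adj u v)
    (hu1 : u ≠ m1) (hu2 : u ≠ m2) (hv1 : v ≠ m1)
    (hsep : ∀ p : G.Walk m1 v, p.IsPath → u ∈ p.support) :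
    ∃ w1 w2 : Sym2 V → ℝ,
      (∀ e ∈ G.edgeSet, 0 < w1 e) ∧ (∀ e ∈ G.edgeSet, 0 < w2 e) ∧
      (∀ p : G.Walk m1 m2, p.IsPath →
        (p.edges.map w1).sum = (p.edges.map w2).sum) ∧
      w1 s(u, v) ≠ w2 s(u, v) :=
  separated_link_unidentifiable_general G m1 m2 u v hadj hu1 hu2 hsep
end

section
/- Let G be a finite simple connected graph with monitors m1 and m2, let u be a vertex of G, and let C be the connected component of G − u containing m1, and suppose m2 ∈ C. Then every edge of G having an endpoint outside C ∪ {u} is unidentifiable: for such an edge e there exist two positive weight functions on the edges of G assigning equal metrics to every simple path from m1 to m2 but different weights to e. -/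
/-!
A simple path from `m1` to `m2` cannot pass through a vertex `a` outside `C ∪ {u}`: the parts of
the path before and after `a` both connect `a` to `C`, so each must visit the cut vertex `u`,
which a path visits only once. Hence no monitored path uses the edge `s(a, b)`, and raising its
weight changes no path metric.
-/

/-- The graph `G` with the vertex `u` deleted: all edges incident to `u` are
removed (so `u` becomes isolated, and reachability to any other vertex matches
reachability in the induced subgraph `G − u`). -/
def delVert {V : Type*} (G : SimpleGraph V) (u : V) : SimpleGraph V where
  Adj a b := G.Adj a b ∧ a ≠ u ∧ b ≠ u
  symm := by
    constructor
    intro a b h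
    exact ⟨h.1.symm, h.2.2, h.2.1⟩
  loopless := by
    constructor
    intro a h
    exact G.loopless.irrefl a h.1

namespace SimpleGraph

variable {V : Type*} {G : SimpleGraph V} {u x y : V}

lemma Walk.reachable_delVert_of_notMem_support (p : G.Walk x y) (hu : u ∉ p.support) :
    (delVert G u).Reachable x y := by
  induction p with
  | nil => rfl
  | cons h q ih =>
    simp only [Walk.support_cons, List.mem_cons, not_or] at hu
    have hadj : (delVert G u).Adj _ _ :=
      ⟨h, fun hh => hu.1 hh.symm, fun hh => hu.2 (hh ▸ q.start_mem_support)⟩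
    exact hadj.reachable.trans (ih hu.2)

lemma Walk.IsPath.notMem_support_of_not_reachable_delVert [DecidableEq V] {a : V} {p : G.Walk x y}
    (hp : p.IsPath) (hyx : (delVert G u).Reachable y x) (hau : a ≠ u)
    (hax : ¬ (delVert G u).Reachable a x) : a ∉ p.support := by
  intro ha
  have hu_before : u ∈ (p.takeUntil a ha).support := by
    by_contra h
    exact hax ((p.takeUntil a ha).reachable_delVert_of_notMem_support h).symm
  have hu_after : u ∈ (p.dropUntil a ha).support := by
    by_contra h
    exact hax (((p.dropUntil a ha).reachable_delVert_of_notMem_support h).trans hyx)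
  rw [← p.take_spec ha] at hp
  exact hp.ne_of_mem_support_of_append hau.symm hu_before hu_after rfl

end SimpleGraph

lemma List.sum_map_update_of_notMem {α M : Type*} [DecidableEq α] [AddMonoid M] {l : List α}
    {e : α} (he : e ∉ l) (w : α → M) (c : M) :
    (l.map (Function.update w e c)).sum = (l.map w).sum := by
  rw [List.map_congr_left fun x hx => Function.update_of_ne (ne_of_mem_of_not_mem hx he) c w]

theorem cut_off_link_unidentifiable_general {V : Type*}
    (G : SimpleGraph V)
    (u m1 m2 : V)
    (hC : (delVert G u).Reachable m2 m1)
    (a b : V)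
    (ha_out : a ≠ u ∧ ¬ (delVert G u).Reachable a m1) :
    ∃ w1 w2 : Sym2 V → ℝ,
      (∀ e ∈ G.edgeSet, 0 < w1 e) ∧ (∀ e ∈ G.edgeSet, 0 < w2 e) ∧
      (∀ p : G.Walk m1 m2, p.IsPath →
        (p.edges.map w1).sum = (p.edges.map w2).sum) ∧
      w1 s(a, b) ≠ w2 s(a, b) := by
  classical
  refine ⟨1, Function.update 1 s(a, b) 2, fun _ _ => one_pos, fun e _ => ?_, fun p hp => ?_,
    by simp⟩
  · rcases eq_or_ne e s(a, b) with rfl | h <;> simp [*]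
  · have ha : a ∉ p.support := hp.notMem_support_of_not_reachable_delVert hC ha_out.1 ha_out.2
    exact (List.sum_map_update_of_notMem (fun h => ha (p.fst_mem_support_of_mem_edges h)) 1 2).symm

/-- If both monitors `m1`, `m2` lie in the connected component `C`
of `G − u` containing `m1`, then every edge of `G` with an endpoint outside
`C ∪ {u}` is unidentifiable. -/
theorem cut_off_link_unidentifiable {V : Type*} [Fintype V]
    (G : SimpleGraph V) (hG : G.Connected)
    (u m1 m2 : V) (hm : m1 ≠ m2) (hm1 : m1 ≠ u) (hm2 : m2 ≠ u)
    (hC : (delVert G u).Reachable m2 m1)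
    (a b : V) (hab : G.Adj a b)
    (ha_out : a ≠ u ∧ ¬ (delVert G u).Reachable a m1) :
    ∃ w1 w2 : Sym2 V → ℝ,
      (∀ e ∈ G.edgeSet, 0 < w1 e) ∧ (∀ e ∈ G.edgeSet, 0 < w2 e) ∧
      (∀ p : G.Walk m1 m2, p.IsPath →
        (p.edges.map w1).sum = (p.edges.map w2).sum) ∧
      w1 s(a, b) ≠ w2 s(a, b) :=
  cut_off_link_unidentifiable_general G u m1 m2 hC a b ha_out
end

section
/- Let G be a finite simple connected graph with monitors m1 and m2, and let v be a vertex of G with v ∉ {m1, m2} that has exactly two incident edges e1 and e2. Then e1 is unidentifiable: there exist two positive weight functions on the edges of G that assign equal metrics to every simple path from m1 to m2 but assign different weights to e1 (only the sum of the weights of e1 and e2 is determined). -/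
/-!
Every `m1`–`m2` path through the interior vertex `v` enters and leaves it, so it uses two distinct
edges at `v`; as `v` has only the edges `e1` and `e2`, a path contains `e1` exactly when it
contains `e2`. Moving weight from `e2` to `e1` therefore changes no path metric, but changes the
weight of `e1`.
-/

open SimpleGraph

namespace List.Nodup

variable {α M : Type*} [DecidableEq α] [AddCommGroup M]

theorem sum_map_add_single_sub_single {l : List α} (hl : l.Nodup) {a b : α}
    (hab : a ∈ l ↔ b ∈ l) (w : α → M) (t : M) :
    (l.map (w + Pi.single a t - Pi.single b t)).sum = (l.map w).sum := by
  rw [← List.sum_toFinset _ hl, ← List.sum_toFinset _ hl]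
  simp [Finset.sum_add_distrib, Finset.sum_sub_distrib, Finset.sum_pi_single', hab]

end List.Nodup

namespace SimpleGraph.Walk

variable {V : Type*} {G : SimpleGraph V} {u w x : V} {p : G.Walk u w}

theorem IsTrail.exists_ne_edges_of_mem_support (hp : p.IsTrail) (hx : x ∈ p.support)
    (hxu : x ≠ u) (hxw : x ≠ w) :
    ∃ e ∈ p.edges, ∃ e' ∈ p.edges, e ≠ e' ∧ x ∈ e ∧ x ∈ e' := by
  classical
  have hq : ¬(p.takeUntil x hx).Nil := not_nil_of_ne hxu.symm
  have hr : ¬(p.dropUntil x hx).Nil := not_nil_of_ne hxw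
  have hin := mk_penultimate_end_mem_edges hq
  have hout := mk_start_snd_mem_edges hr
  exact ⟨_, p.edges_takeUntil_subset_edges hx hin, _, p.edges_dropUntil_subset_edges hx hout,
    fun h ↦ hp.disjoint_edges_takeUntil_dropUntil hx hin (h ▸ hout),
    Sym2.mem_mk_right _ _, Sym2.mem_mk_left _ _⟩

theorem IsTrail.mem_edges_of_incidenceSet_eq_pair (hp : p.IsTrail) {e₁ e₂ : Sym2 V}
    (hinc : G.incidenceSet x = {e₁, e₂}) (hx : x ∈ p.support) (hxu : x ≠ u) (hxw : x ≠ w) :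
    e₁ ∈ p.edges ∧ e₂ ∈ p.edges := by
  obtain ⟨f, hf, f', hf', hne, hxf, hxf'⟩ := hp.exists_ne_edges_of_mem_support hx hxu hxw
  have hf_inc : f ∈ G.incidenceSet x := ⟨p.edges_subset_edgeSet hf, hxf⟩
  have hf'_inc : f' ∈ G.incidenceSet x := ⟨p.edges_subset_edgeSet hf', hxf'⟩
  rw [hinc] at hf_inc hf'_inc
  rcases hf_inc with rfl | rfl <;> rcases hf'_inc with rfl | rfl <;> simp_all

theorem IsTrail.mem_edges_iff_of_incidenceSet_eq_pair (hp : p.IsTrail) {e₁ e₂ : Sym2 V}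
    (hinc : G.incidenceSet x = {e₁, e₂}) (hxu : x ≠ u) (hxw : x ≠ w) :
    e₁ ∈ p.edges ↔ e₂ ∈ p.edges := by
  have hx₁ : x ∈ e₁ := (show e₁ ∈ G.incidenceSet x by simp [hinc]).2
  have hx₂ : x ∈ e₂ := (show e₂ ∈ G.incidenceSet x by simp [hinc]).2
  constructor
  · exact fun h ↦ (hp.mem_edges_of_incidenceSet_eq_pair hinc
      (mem_support_of_mem_edges h hx₁) hxu hxw).2
  · exact fun h ↦ (hp.mem_edges_of_incidenceSet_eq_pair hinc
      (mem_support_of_mem_edges h hx₂) hxu hxw).1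

end SimpleGraph.Walk

theorem degree_two_link_unidentifiable_general {V : Type*}
    (G : SimpleGraph V)
    (m1 m2 : V)
    (v : V) (hv1 : v ≠ m1) (hv2 : v ≠ m2)
    (e1 e2 : Sym2 V) (he : e1 ≠ e2)
    (hinc : G.incidenceSet v = {e1, e2}) :
    ∃ w1 w2 : Sym2 V → ℝ,
      (∀ e ∈ G.edgeSet, 0 < w1 e) ∧ (∀ e ∈ G.edgeSet, 0 < w2 e) ∧
      (∀ p : G.Walk m1 m2, p.IsPath →
        (p.edges.map w1).sum = (p.edges.map w2).sum) ∧
      w1 e1 ≠ w2 e1 := by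
  classical
  refine ⟨1, 1 + Pi.single e1 (1 / 2) - Pi.single e2 (1 / 2), fun _ _ ↦ one_pos,
    fun e _ ↦ ?_, fun p hp ↦ ?_, ?_⟩
  · simp only [Pi.add_apply, Pi.sub_apply, Pi.one_apply, Pi.single_apply]
    split_ifs <;> norm_num
  · exact (hp.isTrail.edges_nodup.sum_map_add_single_sub_single
      (hp.isTrail.mem_edges_iff_of_incidenceSet_eq_pair hinc hv1 hv2) 1 _).symm
  · simp [he]

/-- If a non-monitor vertex `v` has exactly two incident edges
`e1` and `e2`, then `e1` is unidentifiable (only the sum of the weights of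
`e1` and `e2` is determined). -/
theorem degree_two_link_unidentifiable {V : Type*} [Fintype V]
    (G : SimpleGraph V) (hG : G.Connected)
    (m1 m2 : V) (hm : m1 ≠ m2)
    (v : V) (hv1 : v ≠ m1) (hv2 : v ≠ m2)
    (e1 e2 : Sym2 V) (he : e1 ≠ e2)
    (hinc : G.incidenceSet v = {e1, e2}) :
    ∃ w1 w2 : Sym2 V → ℝ,
      (∀ e ∈ G.edgeSet, 0 < w1 e) ∧ (∀ e ∈ G.edgeSet, 0 < w2 e) ∧
      (∀ p : G.Walk m1 m2, p.IsPath →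
        (p.edges.map w1).sum = (p.edges.map w2).sum) ∧
      w1 e1 ≠ w2 e1 :=
  degree_two_link_unidentifiable_general G m1 m2 v hv1 hv2 e1 e2 he hinc
end
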